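/- Let H be a connected m-joined graph in which for every vertex v there are at least m vertices within distance ℓ of v, where ℓ = ⌈log m / log(1+t)⌉ for some t ≥ 1. Then diam(H) ≤ 2ℓ + 1. -/

import Mathlib

/-!
If the `ℓ`-balls around `u` and `v` meet, a common vertex gives a walk of length at most `2ℓ`
from `u` to `v`. Otherwise they are disjoint sets of at least `m` vertices each, so
`m`-joinedness gives an edge between them and hence a walk of length at most `2ℓ + 1`.
-/

namespace SimpleGraph

variable {V : Type*} (H : SimpleGraph V)

def IsJoined (m : ℕ) : Prop :=
  ∀ S T : Finset V, Disjoint S T → S.card = m → T.card = m → ∃ a ∈ S, ∃ b ∈ T, H.Adj a b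

variable {H}

theorem IsJoined.exists_adj {m : ℕ} (hJ : H.IsJoined m) {A B : Finset V} (hAB : Disjoint A B)
    (hA : m ≤ A.card) (hB : m ≤ B.card) : ∃ a ∈ A, ∃ b ∈ B, H.Adj a b := by
  obtain ⟨S, hSA, hS⟩ := Finset.exists_subset_card_eq hA
  obtain ⟨T, hTB, hT⟩ := Finset.exists_subset_card_eq hB
  obtain ⟨a, ha, b, hb, hab⟩ := hJ S T (hAB.mono hSA hTB) hS hT
  exact ⟨a, hSA ha, b, hTB hb, hab⟩

namespace Connected

variable {u v w : V}

theorem dist_le_add_of_dist_le (hconn : H.Connected) {r s : ℕ} (hu : H.dist u w ≤ r)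
    (hv : H.dist v w ≤ s) : H.dist u v ≤ r + s :=
  calc H.dist u v ≤ H.dist u w + H.dist w v := hconn.dist_triangle
    _ ≤ r + s := by rw [dist_comm (u := w)]; omega

theorem dist_le_add_add_one_of_adj (hconn : H.Connected) {a b : V} {r s : ℕ}
    (hua : H.dist u a ≤ r) (hab : H.Adj a b) (hvb : H.dist v b ≤ s) : H.dist u v ≤ r + s + 1 :=
  calc H.dist u v ≤ H.dist u b + H.dist b v := hconn.dist_triangle
    _ ≤ (r + 1) + s := by
      have hub : H.dist u b ≤ H.dist u a + H.dist a b := hconn.dist_triangle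
      rw [dist_eq_one_iff_adj.mpr hab] at hub
      rw [dist_comm (u := b)]
      omega
    _ = r + s + 1 := by ring

theorem dist_le_two_mul_add_one_of_isJoined (hconn : H.Connected) [Fintype V] {m ℓ : ℕ}
    (hJ : H.IsJoined m)
    (hball : ∀ v : V, m ≤ (Finset.univ.filter (fun u => H.dist v u ≤ ℓ)).card) (u v : V) :
    H.dist u v ≤ 2 * ℓ + 1 := by
  by_cases hdisj : Disjoint (Finset.univ.filter (fun w => H.dist u w ≤ ℓ))
      (Finset.univ.filter (fun w => H.dist v w ≤ ℓ))
  · obtain ⟨a, ha, b, hb, hab⟩ := hJ.exists_adj hdisj (hball u) (hball v)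
    simp only [Finset.mem_filter, Finset.mem_univ, true_and] at ha hb
    linarith [hconn.dist_le_add_add_one_of_adj ha hab hb]
  · obtain ⟨w, hwu, hwv⟩ := Finset.not_disjoint_iff.mp hdisj
    simp only [Finset.mem_filter, Finset.mem_univ, true_and] at hwu hwv
    linarith [hconn.dist_le_add_of_dist_le hwu hwv]

end Connected

end SimpleGraph

open Classical in
theorem stmt7_general {V : Type*} [Fintype V] (H : SimpleGraph V) (m : ℕ)
    (hconn : H.Connected)
    (hJ : ∀ S T : Finset V, Disjoint S T → S.card = m → T.card = m →
      ∃ a ∈ S, ∃ b ∈ T, H.Adj a b)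
    (ℓ : ℕ)
    (hball : ∀ v : V, m ≤ (Finset.univ.filter (fun u => H.dist v u ≤ ℓ)).card) :
    ∀ u v : V, H.dist u v ≤ 2 * ℓ + 1 :=
  hconn.dist_le_two_mul_add_one_of_isJoined hJ hball

open Classical in
theorem stmt7 {V : Type*} [Fintype V] (H : SimpleGraph V) (m : ℕ) (t : ℝ) (ht : 1 ≤ t)
    (hconn : H.Connected)
    (hJ : ∀ S T : Finset V, Disjoint S T → S.card = m → T.card = m →
      ∃ a ∈ S, ∃ b ∈ T, H.Adj a b)
    (ℓ : ℕ) (hℓ : ℓ = ⌈Real.log m / Real.log (1 + t)⌉₊)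
    (hball : ∀ v : V, m ≤ (Finset.univ.filter (fun u => H.dist v u ≤ ℓ)).card) :
    ∀ u v : V, H.dist u v ≤ 2 * ℓ + 1 :=
  stmt7_general H m hconn hJ ℓ hball
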